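/- A gate obtained from an m-gate H using a chordless path P of length l−1 (with l vertices, l ≥ 2) is a (m + l − 1)-gate; that is, the number of maximal cliques increases by l − 1 in the recursive construction step. -/

import Mathlib

/-- A maximal clique (a maximal complete vertex set) of a simple graph. -/
def IsMaxClique {V : Type} (G : SimpleGraph V) (s : Set V) : Prop :=
  G.IsClique s ∧ ∀ t : Set V, G.IsClique t → s ⊆ t → s = t

/-- The number of maximal cliques of a graph. -/
noncomputable def numMaxCliques {V : Type} (G : SimpleGraph V) : ℕ :=
  {s : Set V | IsMaxClique G s}.ncard

/-- The graph obtained from `G` and a chordless path on `l` new vertices by joining the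
first vertex of the path to every vertex of `A` and the last vertex to every vertex of `B`. -/
def joinPath {V : Type} (G : SimpleGraph V) (A B : Set V) (l : ℕ) :
    SimpleGraph (V ⊕ Fin l) where
  Adj x y :=
    match x, y with
    | Sum.inl a, Sum.inl b => G.Adj a b
    | Sum.inl a, Sum.inr i => (i.val = 0 ∧ a ∈ A) ∨ (i.val = l - 1 ∧ a ∈ B)
    | Sum.inr i, Sum.inl a => (i.val = 0 ∧ a ∈ A) ∨ (i.val = l - 1 ∧ a ∈ B)
    | Sum.inr i, Sum.inr j => i.val + 1 = j.val ∨ j.val + 1 = i.val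
  symm := by
    refine ⟨?_⟩
    rintro (a | i) (b | j) h <;> simp_all <;> tauto
  loopless := by
    refine ⟨?_⟩
    rintro (a | i) h
    · exact G.loopless.irrefl a h
    · rcases h with h | h <;> omega

/-- Gates, defined recursively (up to isomorphism): chordless cycles `Cₙ`, `n ≥ 4`, are
gates, and joining a new chordless path to two disjoint maximal cliques of a gate
yields a gate. -/
inductive IsGate : {V : Type} → SimpleGraph V → Prop
  | cycle (n : ℕ) (hn : 4 ≤ n) : IsGate (SimpleGraph.cycleGraph n)
  | extend {V : Type} (G : SimpleGraph V) (C C' : Set V) (l : ℕ)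
      (hG : IsGate G) (hC : IsMaxClique G C) (hC' : IsMaxClique G C')
      (hdisj : Disjoint C C') (hl : 2 ≤ l) : IsGate (joinPath G C C' l)
  | iso {V W : Type} (G : SimpleGraph V) (H : SimpleGraph W)
      (hG : IsGate G) (e : G ≃g H) : IsGate H

/-- An EPT representation of `G`: a family of paths in a host tree such that two distinct
vertices are adjacent iff their paths share an edge of the tree. -/
structure EPTRep {V : Type} (G : SimpleGraph V) where
  VT : Type
  T : SimpleGraph VT
  tree : T.IsTree
  src : V → VT
  tgt : V → VT
  walk : (v : V) → T.Walk (src v) (tgt v)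
  isPath : ∀ v, (walk v).IsPath
  adj_iff : ∀ v w : V, v ≠ w →
    (G.Adj v w ↔ ∃ e : Sym2 VT, e ∈ (walk v).edges ∧ e ∈ (walk w).edges)

/-- The edge set of the path representing `v`. -/
def EPTRep.edges {V : Type} {G : SimpleGraph V} (R : EPTRep G) (v : V) :
    Set (Sym2 R.VT) := {e | e ∈ (R.walk v).edges}

/-- The representation is Helly: every nonempty pairwise edge-intersecting subfamily of
paths has a common edge. -/
def EPTRep.Helly {V : Type} {G : SimpleGraph V} (R : EPTRep G) : Prop :=
  ∀ S : Set V, S.Nonempty →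
    (∀ u ∈ S, ∀ v ∈ S, (R.edges u ∩ R.edges v).Nonempty) →
    (⋂ v ∈ S, R.edges v).Nonempty

/-- The host tree has maximum degree at most `h`. -/
def EPTRep.maxDegLE {V : Type} {G : SimpleGraph V} (R : EPTRep G) (h : ℕ) : Prop :=
  ∀ x : R.VT, (R.T.neighborSet x).ncard ≤ h

/-- The class `[h,2,2]`. -/
def InEPTClass (h : ℕ) {V : Type} (G : SimpleGraph V) : Prop :=
  ∃ R : EPTRep G, R.maxDegLE h

/-- Helly EPT graphs. -/
def IsHellyEPT {V : Type} (G : SimpleGraph V) : Prop :=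
  ∃ R : EPTRep G, R.Helly

/-- The class Helly `[h,2,2]`. -/
def InHellyClass (h : ℕ) {V : Type} (G : SimpleGraph V) : Prop :=
  ∃ R : EPTRep G, R.Helly ∧ R.maxDegLE h

/-- Three paths of the representation form a claw at some claw of the host tree. -/
def EPTRep.FormsClaw {V : Type} {G : SimpleGraph V} (R : EPTRep G) (a b c : V) : Prop :=
  ∃ q x y z : R.VT, R.T.Adj q x ∧ R.T.Adj q y ∧ R.T.Adj q z ∧
    x ≠ y ∧ y ≠ z ∧ x ≠ z ∧
    s(q, x) ∈ R.edges a ∧ s(q, y) ∈ R.edges a ∧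
    s(q, y) ∈ R.edges b ∧ s(q, z) ∈ R.edges b ∧
    s(q, x) ∈ R.edges c ∧ s(q, z) ∈ R.edges c

/-- A multipie of size `k` whose paths are those representing the vertices in `S`. -/
def IsMultipie {V : Type} {G : SimpleGraph V} (R : EPTRep G) (k : ℕ) (S : Set V) : Prop :=
  ∃ (q : R.VT) (qi : Fin k → R.VT), Function.Injective qi ∧
    (∀ i, R.T.Adj q (qi i)) ∧
    (∀ v ∈ S, {i : Fin k | qi i ∈ (R.walk v).support}.ncard = 2) ∧
    (∀ u ∈ S, ∀ v ∈ S, ∀ i j : Fin k, i ≠ j →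
      qi i ∈ (R.walk u).support → qi j ∈ (R.walk u).support →
      qi i ∈ (R.walk v).support → qi j ∈ (R.walk v).support → u = v) ∧
    (∀ i, 2 ≤ {v ∈ S | s(q, qi i) ∈ R.edges v}.ncard) ∧
    (∀ a ∈ S, ∀ b ∈ S, ∀ c ∈ S, ¬ R.FormsClaw a b c)

/-- The next index around a cycle. -/
def finNext {k : ℕ} (hk : 0 < k) (i : Fin k) : Fin k :=
  ⟨(i.val + 1) % k, Nat.mod_lt _ hk⟩

/-- `G` has a clique separator: a complete vertex set whose removal disconnects the graph. -/
def HasCliqueSep {V : Type} (G : SimpleGraph V) : Prop :=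
  ∃ C : Set V, G.IsClique C ∧ ¬ (G.induce Cᶜ).Preconnected

/-- An atom of `G`: a maximal vertex subset inducing a connected subgraph without clique
separators. -/
def IsAtomOf {V : Type} (G : SimpleGraph V) (A : Set V) : Prop :=
  (G.induce A).Connected ∧ ¬ HasCliqueSep (G.induce A) ∧
    ∀ B : Set V, A ⊆ B → (G.induce B).Connected → ¬ HasCliqueSep (G.induce B) → A = B

/-!
The maximal cliques of `joinPath G A B l` come in two kinds. Every maximal clique `D` of `G`
survives, enlarged by the first path vertex when `D = A` and by the last one when `D = B`;
and each of the `l - 1` edges of the new path is a maximal clique. Nothing else is maximal: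
since `A` and `B` are disjoint, an old vertex sees at most one path vertex, so a clique meeting
both `G` and the path lies in the lift of `A` or of `B`, and a clique inside the path lies in
one of its edges.
-/

open SimpleGraph

section MaxClique

variable {V : Type} {G : SimpleGraph V} {s : Set V}

lemma isMaxClique_iff_maximal : IsMaxClique G s ↔ Maximal G.IsClique s := by
  rw [maximal_iff]
  rfl

lemma IsMaxClique.nonempty [Nonempty V] (h : IsMaxClique G s) : s.Nonempty := by
  obtain ⟨v⟩ := ‹Nonempty V›
  by_contra hs
  rw [Set.not_nonempty_iff_eq_empty] at hs
  subst hs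
  exact Set.singleton_ne_empty v (h.2 {v} (isClique_singleton v) (Set.empty_subset _)).symm

lemma exists_isMaxClique_superset [Finite V] (h : G.IsClique s) :
    ∃ D, IsMaxClique G D ∧ s ⊆ D := by
  obtain ⟨D, hsD, hD⟩ := Finite.exists_le_maximal h
  exact ⟨D, isMaxClique_iff_maximal.mpr hD, hsD⟩

end MaxClique

namespace IsGate

lemma finite {V : Type} {G : SimpleGraph V} (h : IsGate G) : Finite V := by
  induction h with
  | cycle => infer_instance
  | extend => infer_instance
  | iso G H hG e => exact Finite.of_equiv _ e.toEquiv

lemma nonempty {V : Type} {G : SimpleGraph V} (h : IsGate G) : Nonempty V := by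
  induction h with
  | cycle n hn => exact ⟨⟨0, by omega⟩⟩
  | extend G C C' l hG hC hC' hdisj hl => exact ⟨Sum.inr ⟨0, by omega⟩⟩
  | iso G H hG e ih => exact ih.map e.toEquiv

end IsGate

section JoinPath

variable {V : Type} {G : SimpleGraph V} {A B : Set V} {l : ℕ}

@[simp]
lemma joinPath_adj_inl_inr {a : V} {i : Fin l} :
    (joinPath G A B l).Adj (Sum.inl a) (Sum.inr i) ↔
      (i.val = 0 ∧ a ∈ A) ∨ (i.val = l - 1 ∧ a ∈ B) := Iff.rfl

@[simp]
lemma joinPath_adj_inr_inr {i j : Fin l} :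
    (joinPath G A B l).Adj (Sum.inr i) (Sum.inr j) ↔
      i.val + 1 = j.val ∨ j.val + 1 = i.val := Iff.rfl

lemma eq_of_joinPath_adj_inl_inr (hAB : Disjoint A B) {a : V} {i j : Fin l}
    (hi : (joinPath G A B l).Adj (Sum.inl a) (Sum.inr i))
    (hj : (joinPath G A B l).Adj (Sum.inl a) (Sum.inr j)) : i = j := by
  have hdisj := Set.disjoint_left.mp hAB
  simp only [joinPath_adj_inl_inr] at hi hj
  rcases hi with ⟨hi, ha⟩ | ⟨hi, ha⟩ <;> rcases hj with ⟨hj, ha'⟩ | ⟨hj, ha'⟩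
  · exact Fin.ext (by omega)
  · exact absurd ha' (hdisj ha)
  · exact absurd ha (hdisj ha')
  · exact Fin.ext (by omega)

variable (A B l) in
def liftClique (D : Set V) : Set (V ⊕ Fin l) :=
  {x | match x with
    | Sum.inl a => a ∈ D
    | Sum.inr i => (i.val = 0 ∧ D = A) ∨ (i.val = l - 1 ∧ D = B)}

@[simp]
lemma inl_mem_liftClique {D : Set V} {a : V} : Sum.inl a ∈ liftClique A B l D ↔ a ∈ D :=
  Iff.rfl

@[simp]
lemma inr_mem_liftClique {D : Set V} {i : Fin l} :
    Sum.inr i ∈ liftClique A B l D ↔ (i.val = 0 ∧ D = A) ∨ (i.val = l - 1 ∧ D = B) :=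
  Iff.rfl

lemma liftClique_injective : Function.Injective (liftClique (V := V) A B l) := by
  intro D E h
  ext a
  rw [← inl_mem_liftClique (A := A) (B := B) (l := l), h, inl_mem_liftClique]

def pathEdge (i : Fin (l - 1)) : Set (V ⊕ Fin l) :=
  Sum.inr '' {j | j.val = i.val ∨ j.val = i.val + 1}

@[simp]
lemma inl_notMem_pathEdge {a : V} {i : Fin (l - 1)} : Sum.inl a ∉ pathEdge i := by
  simp [pathEdge]

@[simp]
lemma inr_mem_pathEdge {j : Fin l} {i : Fin (l - 1)} :
    (Sum.inr j : V ⊕ Fin l) ∈ pathEdge i ↔ j.val = i.val ∨ j.val = i.val + 1 := by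
  simp [pathEdge]

lemma pathEdge_injective : Function.Injective (pathEdge (V := V) (l := l)) := by
  intro i j h
  have hi : (Sum.inr ⟨i.val, by omega⟩ : V ⊕ Fin l) ∈ pathEdge j := by
    rw [← h, inr_mem_pathEdge]; exact Or.inl rfl
  have hi' : (Sum.inr ⟨i.val + 1, by omega⟩ : V ⊕ Fin l) ∈ pathEdge j := by
    rw [← h, inr_mem_pathEdge]; exact Or.inr rfl
  simp only [inr_mem_pathEdge] at hi hi'
  exact Fin.ext (by omega)

end JoinPath

section JoinPathCliques

variable {V : Type} {G : SimpleGraph V} {A B : Set V} {l : ℕ}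

lemma isClique_liftClique (hAB : A ≠ B) {D : Set V} (hD : G.IsClique D) :
    (joinPath G A B l).IsClique (liftClique A B l D) := by
  rintro (a | i) hx (b | j) hy hxy
  · exact hD hx hy (fun h => hxy (congrArg Sum.inl h))
  · simp only [inr_mem_liftClique] at hy
    rcases hy with ⟨hj, rfl⟩ | ⟨hj, rfl⟩
    · exact Or.inl ⟨hj, hx⟩
    · exact Or.inr ⟨hj, hx⟩
  · simp only [inr_mem_liftClique] at hx
    rcases hx with ⟨hi, rfl⟩ | ⟨hi, rfl⟩
    · exact Or.inl ⟨hi, hy⟩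
    · exact Or.inr ⟨hi, hy⟩
  · have hij : i.val ≠ j.val := fun h => hxy (congrArg Sum.inr (Fin.ext h))
    simp only [inr_mem_liftClique] at hx hy
    rcases hx with ⟨hi, rfl⟩ | ⟨hi, rfl⟩ <;> rcases hy with ⟨hj, h⟩ | ⟨hj, h⟩
    all_goals first | omega | exact absurd h hAB | exact absurd h.symm hAB

lemma isMaxClique_liftClique (hl : 2 ≤ l) (hA : G.IsClique A) (hB : G.IsClique B)
    (hAB : A ≠ B) {D : Set V} (hD : IsMaxClique G D) (hDne : D.Nonempty) :
    IsMaxClique (joinPath G A B l) (liftClique A B l D) := by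
  refine ⟨isClique_liftClique hAB hD.1, fun t ht hsub => hsub.antisymm ?_⟩
  have hinl : {b | Sum.inl b ∈ t} = D := by
    refine (hD.2 _ (fun a ha b hb hab => ht ha hb (Sum.inl_injective.ne hab)) ?_).symm
    exact fun b hb => hsub (inl_mem_liftClique.mpr hb)
  rintro (a | i) hx
  · exact inl_mem_liftClique.mpr (hinl ▸ hx)
  have hadj : ∀ b ∈ D, (i.val = 0 ∧ b ∈ A) ∨ (i.val = l - 1 ∧ b ∈ B) := fun b hb =>
    ht (hsub (inl_mem_liftClique.mpr hb)) hx Sum.inl_ne_inr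
  obtain ⟨a, ha⟩ := hDne
  rcases hadj a ha with ⟨hi, -⟩ | ⟨hi, -⟩
  · have hDA : D ⊆ A := fun b hb => ((hadj b hb).resolve_right (by omega)).2
    exact Or.inl ⟨hi, hD.2 A hA hDA⟩
  · have hDB : D ⊆ B := fun b hb => ((hadj b hb).resolve_left (by omega)).2
    exact Or.inr ⟨hi, hD.2 B hB hDB⟩

lemma isMaxClique_pathEdge (hAB : Disjoint A B) (i : Fin (l - 1)) :
    IsMaxClique (joinPath G A B l) (pathEdge i) := by
  have hclique : (joinPath G A B l).IsClique (pathEdge i) := by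
    rintro _ ⟨j, hj, rfl⟩ _ ⟨k, hk, rfl⟩ hjk
    have : j.val ≠ k.val := fun h => hjk (congrArg Sum.inr (Fin.ext h))
    simp only [Set.mem_ofPred_eq] at hj hk
    simp only [joinPath_adj_inr_inr]
    omega
  refine ⟨hclique, fun t ht hsub => hsub.antisymm ?_⟩
  have hfst : (Sum.inr ⟨i.val, by omega⟩ : V ⊕ Fin l) ∈ t :=
    hsub (inr_mem_pathEdge.mpr (Or.inl rfl))
  have hsnd : (Sum.inr ⟨i.val + 1, by omega⟩ : V ⊕ Fin l) ∈ t :=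
    hsub (inr_mem_pathEdge.mpr (Or.inr rfl))
  rintro (a | j) hx
  · have h := eq_of_joinPath_adj_inl_inr hAB (ht hx hfst Sum.inl_ne_inr)
      (ht hx hsnd Sum.inl_ne_inr)
    simp [Fin.ext_iff] at h
  · rw [inr_mem_pathEdge]
    by_contra hj
    have h₁ := ht hx hfst (fun h => hj (Or.inl (by cases h; rfl)))
    have h₂ := ht hx hsnd (fun h => hj (Or.inr (by cases h; rfl)))
    simp only [joinPath_adj_inr_inr] at h₁ h₂
    omega

lemma exists_subset_liftClique [Finite V] {K : Set (V ⊕ Fin l)}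
    (hK : (joinPath G A B l).IsClique K) (hpath : ∀ i, Sum.inr i ∉ K) :
    ∃ D, IsMaxClique G D ∧ K ⊆ liftClique A B l D := by
  have hclique : G.IsClique (Sum.inl ⁻¹' K) := fun a ha b hb hab =>
    hK ha hb (Sum.inl_injective.ne hab)
  obtain ⟨D, hD, hKD⟩ := exists_isMaxClique_superset hclique
  refine ⟨D, hD, ?_⟩
  rintro (a | i) hx
  · exact hKD hx
  · exact absurd hx (hpath i)

lemma subset_liftClique_of_inl_mem_of_inr_mem (hl : 2 ≤ l) (hAB : Disjoint A B)
    {K : Set (V ⊕ Fin l)} (hK : (joinPath G A B l).IsClique K) {a : V} {i : Fin l}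
    (ha : Sum.inl a ∈ K) (hi : Sum.inr i ∈ K) :
    K ⊆ liftClique A B l A ∨ K ⊆ liftClique A B l B := by
  have hai := hK ha hi Sum.inl_ne_inr
  have honly : ∀ j, Sum.inr j ∈ K → j = i := fun j hj =>
    eq_of_joinPath_adj_inl_inr hAB (hK ha hj Sum.inl_ne_inr) hai
  have hold : ∀ b, Sum.inl b ∈ K → (i.val = 0 ∧ b ∈ A) ∨ (i.val = l - 1 ∧ b ∈ B) :=
    fun b hb => hK hb hi Sum.inl_ne_inr
  rcases hai with ⟨hi0, -⟩ | ⟨hil, -⟩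
  · left
    rintro (b | j) hx
    · exact ((hold b hx).resolve_right (by omega)).2
    · exact Or.inl ⟨honly j hx ▸ hi0, rfl⟩
  · right
    rintro (b | j) hx
    · exact ((hold b hx).resolve_left (by omega)).2
    · exact Or.inr ⟨honly j hx ▸ hil, rfl⟩

lemma exists_subset_pathEdge (hl : 2 ≤ l) {K : Set (V ⊕ Fin l)}
    (hK : (joinPath G A B l).IsClique K) (hold : ∀ a, Sum.inl a ∉ K) :
    ∃ i, K ⊆ pathEdge i := by
  by_cases hempty : ∀ j, Sum.inr j ∉ K
  · refine ⟨⟨0, by omega⟩, ?_⟩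
    rintro (a | j) hx
    exacts [absurd hx (hold a), absurd hx (hempty j)]
  push Not at hempty
  obtain ⟨j, hj⟩ := hempty
  have hnear : ∀ k, Sum.inr k ∈ K → k = j ∨ k.val + 1 = j.val ∨ j.val + 1 = k.val :=
    fun k hk => or_iff_not_imp_left.mpr fun hkj => hK hk hj (fun h => hkj (Sum.inr_injective h))
  -- `j - 1` and `j + 1` are not adjacent, so `K` lies in `{j - 1, j}` or in `{j, j + 1}`.
  by_cases hpred : ∃ k, Sum.inr k ∈ K ∧ k.val + 1 = j.val
  · obtain ⟨k, hk, hkj⟩ := hpred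
    refine ⟨⟨j.val - 1, by omega⟩, ?_⟩
    rintro (a | k') hx
    · exact absurd hx (hold a)
    simp only [inr_mem_pathEdge]
    have hk'k : k' = k ∨ (joinPath G A B l).Adj (Sum.inr k') (Sum.inr k) :=
      or_iff_not_imp_left.mpr fun h => hK hx hk (fun h' => h (Sum.inr_injective h'))
    have hk'j := hnear k' hx
    simp only [joinPath_adj_inr_inr, Fin.ext_iff] at hk'k hk'j
    omega
  · push Not at hpred
    refine ⟨⟨min j.val (l - 2), by omega⟩, ?_⟩
    rintro (a | k) hx
    · exact absurd hx (hold a)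
    simp only [inr_mem_pathEdge]
    have hkj := hnear k hx
    simp only [Fin.ext_iff] at hkj
    have := hpred k hx
    omega

lemma exists_superset_of_isClique_joinPath [Finite V] (hl : 2 ≤ l) (hAB : Disjoint A B)
    (hA : IsMaxClique G A) (hB : IsMaxClique G B) {K : Set (V ⊕ Fin l)}
    (hK : (joinPath G A B l).IsClique K) :
    (∃ D, IsMaxClique G D ∧ K ⊆ liftClique A B l D) ∨ ∃ i, K ⊆ pathEdge i := by
  by_cases hpath : ∃ i, Sum.inr i ∈ K
  · obtain ⟨i, hi⟩ := hpath
    by_cases hold : ∃ a, Sum.inl a ∈ K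
    · obtain ⟨a, ha⟩ := hold
      rcases subset_liftClique_of_inl_mem_of_inr_mem hl hAB hK ha hi with h | h
      exacts [Or.inl ⟨A, hA, h⟩, Or.inl ⟨B, hB, h⟩]
    · push Not at hold
      exact Or.inr (exists_subset_pathEdge hl hK hold)
  · push Not at hpath
    exact Or.inl (exists_subset_liftClique hK hpath)

end JoinPathCliques

section Count

variable {V : Type} {G : SimpleGraph V} {A B : Set V} {l : ℕ}

lemma setOf_isMaxClique_joinPath [Finite V] [Nonempty V] (hl : 2 ≤ l)
    (hA : IsMaxClique G A) (hB : IsMaxClique G B) (hAB : Disjoint A B) :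
    {K | IsMaxClique (joinPath G A B l) K} =
      liftClique A B l '' {D | IsMaxClique G D} ∪ Set.range pathEdge := by
  have hne : A ≠ B := by
    rintro rfl
    obtain ⟨a, ha⟩ := hA.nonempty
    exact Set.disjoint_left.mp hAB ha ha
  have hlift : ∀ D, IsMaxClique G D → IsMaxClique (joinPath G A B l) (liftClique A B l D) :=
    fun D hD => isMaxClique_liftClique hl hA.1 hB.1 hne hD hD.nonempty
  ext K
  constructor
  · intro hK
    rcases exists_superset_of_isClique_joinPath hl hAB hA hB hK.1 with ⟨D, hD, hKD⟩ | ⟨i, hKi⟩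
    · exact Or.inl ⟨D, hD, (hK.2 _ (hlift D hD).1 hKD).symm⟩
    · exact Or.inr ⟨i, (hK.2 _ (isMaxClique_pathEdge hAB i).1 hKi).symm⟩
  · rintro (⟨D, hD, rfl⟩ | ⟨i, rfl⟩)
    exacts [hlift D hD, isMaxClique_pathEdge hAB i]

lemma numMaxCliques_joinPath [Finite V] [Nonempty V] (hl : 2 ≤ l)
    (hA : IsMaxClique G A) (hB : IsMaxClique G B) (hAB : Disjoint A B) :
    numMaxCliques (joinPath G A B l) = numMaxCliques G + (l - 1) := by
  have hdisj : Disjoint (liftClique A B l '' {D | IsMaxClique G D}) (Set.range pathEdge) := by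
    rw [Set.disjoint_left]
    rintro _ ⟨D, hD, rfl⟩ ⟨i, hi⟩
    obtain ⟨a, ha⟩ := IsMaxClique.nonempty hD
    exact inl_notMem_pathEdge (hi ▸ inl_mem_liftClique.mpr ha)
  rw [numMaxCliques, setOf_isMaxClique_joinPath hl hA hB hAB, Set.ncard_union_eq hdisj,
    Set.ncard_image_of_injective _ liftClique_injective,
    Set.ncard_range_of_injective pathEdge_injective, Nat.card_fin]
  rfl

end Count

theorem stmt3 {V : Type} (G : SimpleGraph V) (C C' : Set V) (m l : ℕ)
    (hG : IsGate G) (hm : numMaxCliques G = m)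
    (hC : IsMaxClique G C) (hC' : IsMaxClique G C')
    (hdisj : Disjoint C C') (hl : 2 ≤ l) :
    numMaxCliques (joinPath G C C' l) = m + l - 1 := by
  have := hG.finite
  have := hG.nonempty
  rw [numMaxCliques_joinPath hl hC hC' hdisj, hm]
  omega
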